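/- Let φ : L²[0,1] → ℝ ∪ {+∞} be defined by φ(x) = ∫₀¹ (x(t) − t)²/t dt if x ≥ −1 almost everywhere, and +∞ otherwise. Then the relative algebraic interior of dom φ is empty. -/

import Mathlib

/-!
If `x` lies in `dom φ`, then `x ≤ N` on a set `E ⊆ (a, 1]` of positive measure for some `N` and
some `a > 0`. For a point `p` of the support of Lebesgue measure on `E`, the function
`b = 1_E · |s - p|^(-1/4)` is square integrable, nonnegative and vanishes on `(0, a]`, so it lies in
`dom φ`; yet it is essentially unbounded on `E`. Hence `-b ∈ span (dom φ - dom φ)`, while for every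
`t > 0` the function `x - t b` drops below `-1` on a set of positive measure.
-/

open Pointwise MeasureTheory

/-- Lebesgue measure on the interval `(0, 1]`. -/
noncomputable def μ0 : Measure ℝ := volume.restrict (Set.Ioc 0 1)

/-- The relative algebraic interior of a set `S`. -/
def icr {X : Type*} [AddCommGroup X] [Module ℝ X] (S : Set X) : Set X :=
  {x | x ∈ S ∧ ∀ y ∈ Submodule.span ℝ (S - S), ∃ t : ℝ, 0 < t ∧ x + t • y ∈ S}

/-- The effective domain of `φ(x) = ∫₀¹ (x(t) − t)²/t dt` (with value `+∞` unless
`x ≥ −1` a.e.), viewed inside `L²[0,1]`. -/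
def domPhi : Set (Lp ℝ 2 μ0) :=
  {x | (∀ᵐ t ∂μ0, (-1 : ℝ) ≤ x t) ∧
    (∫⁻ t, ENNReal.ofReal ((x t - t) ^ 2 / t) ∂μ0) < ⊤}

open Set Filter Topology

instance : IsFiniteMeasure μ0 := isFiniteMeasure_restrict.2 (by simp)

instance : NullSingletonClass μ0 := Measure.restrict.instNullSingletonClass _

lemma intervalIntegrable_abs_sub_rpow {r : ℝ} (hr : -1 < r) (p a b : ℝ) :
    IntervalIntegrable (fun s => |s - p| ^ r) volume a b := by
  have hloc : LocallyIntegrable (fun u : ℝ => |u| ^ r) :=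
    locallyIntegrable_of_norm_le_rpow (C := 1) (α := -r) (by simp) (by simp; linarith)
      (ae_of_all _ fun u => by simp [abs_of_nonneg (Real.rpow_nonneg (abs_nonneg u) r)])
      (measurable_abs.pow_const r).aestronglyMeasurable
  have h : IntervalIntegrable (fun u : ℝ => |u| ^ r) volume (a - p) (b - p) :=
    (hloc.integrableOn_isCompact isCompact_uIcc).intervalIntegrable
  simpa using h.comp_sub_right p

lemma tendsto_abs_sub_rpow_nhdsNE {r : ℝ} (hr : r < 0) (p : ℝ) :
    Tendsto (fun s => |s - p| ^ r) (𝓝[≠] p) atTop := by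
  refine (tendsto_rpow_neg_nhdsGT_zero hr).comp (tendsto_nhdsWithin_iff.2 ⟨?_, ?_⟩)
  · exact (Continuous.tendsto' (by fun_prop) p 0 (by simp)).mono_left nhdsWithin_le_nhds
  · exact eventually_nhdsWithin_of_forall fun s hs => abs_pos.2 (sub_ne_zero.2 hs)

lemma not_ae_le_of_tendsto_atTop {X : Type*} [TopologicalSpace X] [MeasurableSpace X]
    {ν : Measure X} [NullSingletonClass ν] {p : X} (hp : p ∈ ν.support) {g : X → ℝ}
    (hg : Tendsto g (𝓝[≠] p) atTop) (M : ℝ) : ¬ ∀ᵐ s ∂ν, g s ≤ M := by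
  intro hle
  obtain ⟨U, hU, hUg⟩ := mem_nhdsWithin_iff_exists_mem_nhds_inter.1 (hg.eventually_gt_atTop M)
  have hUsub : U ⊆ {s | ¬ g s ≤ M} ∪ {p} := fun s hs => by
    by_cases hsp : s = p
    · exact Or.inr hsp
    · exact Or.inl (not_le.2 (hUg ⟨hs, hsp⟩))
  have hU0 : ν U = 0 :=
    measure_mono_null hUsub (measure_union_null (ae_iff.1 hle) (measure_singleton p))
  exact ((Measure.mem_support_iff_forall p).1 hp U hU).ne' hU0

lemma memLp_abs_sub_rpow_neg_quarter (p : ℝ) :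
    MemLp (fun s => |s - p| ^ (-(1 / 4) : ℝ)) 2 μ0 := by
  have hmeas : AEStronglyMeasurable (fun s => |s - p| ^ (-(1 / 4) : ℝ)) μ0 :=
    ((measurable_id.sub_const p).abs.pow_const _).aestronglyMeasurable
  refine (memLp_two_iff_integrable_sq hmeas).2 ?_
  have hsq : ∀ s : ℝ, (|s - p| ^ (-(1 / 4) : ℝ)) ^ 2 = |s - p| ^ (-(1 / 2) : ℝ) := fun s => by
    rw [← Real.rpow_natCast, ← Real.rpow_mul (abs_nonneg _)]
    norm_num
  simp_rw [hsq]
  exact (intervalIntegrable_abs_sub_rpow (by norm_num) p 0 1).1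

lemma sq_sub_div_le_of_eq_zero {a s y : ℝ} (ha : 0 < a) (hs : s ∈ Ioc 0 1)
    (hy : s ≤ a → y = 0) : (y - s) ^ 2 / s ≤ 2 / a * y ^ 2 + 2 := by
  obtain ⟨hs0, hs1⟩ := hs
  rcases le_or_gt s a with hsa | hsa
  · rw [hy hsa, zero_sub, neg_sq, sq, mul_div_assoc, div_self hs0.ne']
    nlinarith
  · calc (y - s) ^ 2 / s ≤ (2 * y ^ 2 + 2 * s ^ 2) / s :=
          div_le_div_of_nonneg_right (by nlinarith [sq_nonneg (y + s)]) hs0.le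
      _ = 2 * y ^ 2 / s + 2 * s := by field_simp
      _ ≤ 2 * y ^ 2 / a + 2 :=
          add_le_add (div_le_div_of_nonneg_left (by positivity) ha hsa.le) (by linarith)
      _ = 2 / a * y ^ 2 + 2 := by ring

lemma mem_domPhi_of_ae_eq_zero_of_le {f : Lp ℝ 2 μ0} {a : ℝ} (ha : 0 < a)
    (hf : ∀ᵐ s ∂μ0, -1 ≤ f s) (hf0 : ∀ᵐ s ∂μ0, s ≤ a → f s = 0) : f ∈ domPhi := by
  refine ⟨hf, ?_⟩
  have hint : Integrable (fun s => 2 / a * f s ^ 2 + 2) μ0 :=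
    ((Lp.memLp f).integrable_sq.const_mul _).add (integrable_const 2)
  refine lt_of_le_of_lt (lintegral_mono_ae ?_) hint.lintegral_lt_top
  filter_upwards [ae_restrict_mem measurableSet_Ioc, hf0] with s hs hs0
  exact ENNReal.ofReal_le_ofReal (sq_sub_div_le_of_eq_zero ha hs hs0)

lemma zero_mem_domPhi : (0 : Lp ℝ 2 μ0) ∈ domPhi := by
  refine mem_domPhi_of_ae_eq_zero_of_le one_pos ?_ ?_ <;>
    filter_upwards [Lp.coeFn_zero ℝ 2 μ0] with s hs <;> simp only [hs, Pi.zero_apply] <;> norm_num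

lemma exists_pos_measure_le_inter_Ioi (x : ℝ → ℝ) :
    ∃ N k : ℕ, 0 < μ0 ({s | x s ≤ N} ∩ Ioi (1 / ((k : ℝ) + 1))) := by
  by_contra! h
  have hcover : Ioc 0 1 ⊆ ⋃ (N : ℕ) (k : ℕ), {s | x s ≤ N} ∩ Ioi (1 / ((k : ℝ) + 1)) := by
    intro s hs
    obtain ⟨k, hk⟩ := exists_nat_one_div_lt hs.1
    exact mem_iUnion₂.2 ⟨⌈x s⌉₊, k, Nat.le_ceil (x s), hk⟩
  have h0 : μ0 (Ioc 0 1) = 0 := measure_mono_null hcover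
    (measure_iUnion_null fun N => measure_iUnion_null fun k => nonpos_iff_eq_zero.1 (h N k))
  simp [μ0] at h0

lemma exists_mem_domPhi_not_ae_le {E : Set ℝ} (hE : MeasurableSet E) {a : ℝ} (ha : 0 < a)
    (hEa : E ⊆ Ioi a) (hpos : 0 < μ0 E) :
    ∃ b ∈ domPhi, ∀ M : ℝ, ¬ ∀ᵐ s ∂μ0, s ∈ E → b s ≤ M := by
  obtain ⟨p, hp⟩ := Measure.nonempty_support (μ := μ0.restrict E)
    (by rw [Ne, Measure.restrict_eq_zero]; exact hpos.ne')
  set g := E.indicator fun s => |s - p| ^ (-(1 / 4) : ℝ)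
  have hg : MemLp g 2 μ0 := (memLp_abs_sub_rpow_neg_quarter p).indicator hE
  refine ⟨hg.toLp g, mem_domPhi_of_ae_eq_zero_of_le ha ?_ ?_, fun M hM => ?_⟩
  · filter_upwards [hg.coeFn_toLp] with s hs
    rw [hs]
    have hg0 : 0 ≤ g s := indicator_nonneg (fun s _ => by positivity) s
    linarith
  · filter_upwards [hg.coeFn_toLp] with s hs hsa
    rw [hs]
    exact indicator_of_notMem (fun hsE => (hEa hsE).not_ge hsa) _
  refine not_ae_le_of_tendsto_atTop hp
    (tendsto_abs_sub_rpow_nhdsNE (r := -(1 / 4)) (by norm_num) p) M ?_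
  rw [ae_restrict_iff' hE]
  filter_upwards [hM, hg.coeFn_toLp] with s hle hs hsE
  rw [hs] at hle
  simpa only [g, indicator_of_mem hsE] using hle hsE

theorem stmt_16 : icr domPhi = ∅ := by
  refine eq_empty_of_forall_notMem fun x ⟨_, hdir⟩ => ?_
  obtain ⟨N, k, hpos⟩ := exists_pos_measure_le_inter_Ioi x
  have hE : MeasurableSet ({s | x s ≤ N} ∩ Ioi (1 / ((k : ℝ) + 1))) :=
    (measurableSet_le (Lp.stronglyMeasurable x).measurable measurable_const).inter
      measurableSet_Ioi
  obtain ⟨b, hb, hb_unbdd⟩ :=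
    exists_mem_domPhi_not_ae_le hE (by positivity) inter_subset_right hpos
  obtain ⟨t, ht, hxt⟩ := hdir (0 - b) (Submodule.subset_span (sub_mem_sub zero_mem_domPhi hb))
  rw [zero_sub, smul_neg, ← sub_eq_add_neg] at hxt
  refine hb_unbdd ((N + 1) / t) ?_
  filter_upwards [hxt.1, Lp.coeFn_sub x (t • b), Lp.coeFn_smul t b] with s hlow hsub hsmul hsE
  rw [hsub, Pi.sub_apply, hsmul, Pi.smul_apply, smul_eq_mul] at hlow
  have hxN : x s ≤ N := hsE.1
  rw [le_div_iff₀ ht]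
  linarith
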